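/- arXiv:2203.01222 — 2 statements merged into one kernel-verified Lean document; each statement's English description precedes it below -/
import Mathlib

section
/- Let μ be a Gaussian probability measure on the Euclidean space ℝⁿ (in the sense that the pushforward of μ under every continuous linear functional is a real Gaussian measure). Let G : ℝⁿ → ℝ be a continuous linear functional, let m = ∫ G x dμ(x) be its mean under μ, and let v = ∫ (G x − m)² dμ(x) be its variance; assume v > 0. Let p ∈ (0,1) and let ρ ∈ ℝ be the unique number with (gaussianReal 0 v)((−∞, ρ]) = p. Then for every q ∈ ℝ: μ({x : G x + q ≤ 0}) ≥ p if and only if m ≤ −q − ρ. -/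
open MeasureTheory ProbabilityTheory
open scoped NNReal ENNReal

/-!
Under `μ` the functional `G` has law `gaussianReal m v`, so `G - m` is a centred Gaussian and the
constraint set has measure `gaussianReal 0 v (Iic (-q - m))`. The centred Gaussian distribution
function is strictly increasing, so comparing this with its value `p` at `ρ` amounts to
comparing `ρ` with `-q - m`.
-/

theorem strictMono_measure_Iic_of_absolutelyContinuous {ν : Measure ℝ} [IsFiniteMeasure ν]
    (hν : volume ≪ ν) : StrictMono fun t => ν (Set.Iic t) := by
  intro s t hst
  have hIoc : 0 < ν (Set.Ioc s t) := hν.pos_mono (by simpa using hst)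
  calc ν (Set.Iic s) < ν (Set.Iic s) + ν (Set.Ioc s t) :=
        ENNReal.lt_add_right (measure_ne_top _ _) hIoc.ne'
    _ = ν (Set.Iic t) := by
        rw [← measure_union (Set.Iic_disjoint_Ioc le_rfl) measurableSet_Ioc,
          Set.Iic_union_Ioc_eq_Iic hst.le]

theorem strictMono_gaussianReal_Iic (μ : ℝ) {v : ℝ≥0} (hv : v ≠ 0) :
    StrictMono fun t => gaussianReal μ v (Set.Iic t) :=
  strictMono_measure_Iic_of_absolutelyContinuous (gaussianReal_absolutelyContinuous' μ hv)

theorem gaussian_linear_chance_constraint_iff_general {n : ℕ}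
    (μ : Measure (EuclideanSpace ℝ (Fin n))) [IsProbabilityMeasure μ]
    (hgauss : ∀ L : EuclideanSpace ℝ (Fin n) →L[ℝ] ℝ,
      ∃ (a : ℝ) (b : ℝ≥0), μ.map L = gaussianReal a b)
    (G : EuclideanSpace ℝ (Fin n) →L[ℝ] ℝ)
    (m v : ℝ)
    (hm : m = ∫ x, G x ∂μ)
    (hv : v = ∫ x, (G x - m) ^ 2 ∂μ)
    (hvpos : 0 < v)
    (p : ℝ)
    (ρ : ℝ) (hρ : gaussianReal 0 v.toNNReal (Set.Iic ρ) = ENNReal.ofReal p) :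
    ∀ q : ℝ, ENNReal.ofReal p ≤ μ {x | G x + q ≤ 0} ↔ m ≤ -q - ρ := by
  obtain ⟨a, b, hab⟩ := hgauss G
  have hG : HasLaw G (gaussianReal a b) μ := ⟨G.continuous.measurable.aemeasurable, hab⟩
  have hma : m = a := by rw [hm, hG.integral_eq, integral_id_gaussianReal]
  have hvb : v = b := by
    rw [hv, hm, ← variance_eq_integral hG.aemeasurable, hG.variance_eq, variance_id_gaussianReal]
  have hb : b ≠ 0 := by exact_mod_cast (hvb ▸ hvpos).ne'
  have hcentered : HasLaw (fun x => G x - a) (gaussianReal 0 b) μ := by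
    simpa using gaussianReal_sub_const hG a
  intro q
  have hset : μ {x | G x + q ≤ 0} = gaussianReal 0 b (Set.Iic (-q - a)) := by
    change _ = gaussianReal 0 b {y | y ≤ -q - a}
    rw [← hcentered.measure_eq measurableSet_Iic]
    congr 1
    ext x
    simp only [Set.mem_ofPred_eq, sub_le_sub_iff_right, le_neg_iff_add_nonpos_right]
  rw [hset, ← hρ, hvb, Real.toNNReal_coe, (strictMono_gaussianReal_Iic 0 hb).le_iff_le, hma]
  exact le_sub_comm

/-- Chance-constraint reformulation for a Gaussian measure on `ℝⁿ`: if `μ` is Gaussian (the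
pushforward under every continuous linear functional is a real Gaussian measure), `G` is a
continuous linear functional with mean `m` and variance `v > 0` under `μ`, and `ρ` is the
`p`-quantile of the centered Gaussian with variance `v`, then
`μ {x : G x + q ≤ 0} ≥ p ↔ m ≤ −q − ρ`. -/
theorem gaussian_linear_chance_constraint_iff {n : ℕ}
    (μ : Measure (EuclideanSpace ℝ (Fin n))) [IsProbabilityMeasure μ]
    (hgauss : ∀ L : EuclideanSpace ℝ (Fin n) →L[ℝ] ℝ,
      ∃ (a : ℝ) (b : ℝ≥0), μ.map L = gaussianReal a b)
    (G : EuclideanSpace ℝ (Fin n) →L[ℝ] ℝ)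
    (m v : ℝ)
    (hm : m = ∫ x, G x ∂μ)
    (hv : v = ∫ x, (G x - m) ^ 2 ∂μ)
    (hvpos : 0 < v)
    (p : ℝ) (hp0 : 0 < p) (hp1 : p < 1)
    (ρ : ℝ) (hρ : gaussianReal 0 v.toNNReal (Set.Iic ρ) = ENNReal.ofReal p) :
    ∀ q : ℝ, ENNReal.ofReal p ≤ μ {x | G x + q ≤ 0} ↔ m ≤ -q - ρ :=
  gaussian_linear_chance_constraint_iff_general μ hgauss G m v hm hv hvpos p ρ hρ
end

section
/- (One-stage separation principle for linear-quadratic stochastic games with shared measurements.) Adopt the setting of the one-stage cost reformulation: y is an ℝᶻ-valued measurement, x₀ = x̂(y) + e with x̂ : ℝᶻ → ℝⁿ measurable, e independent of y with mean zero and covariance Σ_e, and w independent of (y, e) with mean zero and covariance Σ_w; the next state is x₁ = A x₀ + Σⱼ Bⱼ uⱼ + w; player i's cost for measurable square-integrable strategies γⱼ : ℝᶻ → ℝ^{mⱼ} is Jᵢ(γ₁,…,γ_N) = E[½ x₁ᵀ Qᵢ x₁ + lᵢᵀ x₁ + Σⱼ (½ γⱼ(y)ᵀ Rᵢⱼ γⱼ(y)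 + rᵢⱼᵀ γⱼ(y))], assumed well-defined for the strategies considered, with Qᵢ symmetric. Define the associated deterministic one-stage game with exact state s ∈ ℝⁿ by the costs Ĵᵢ(s, u₁,…,u_N) = ½ z(s,u)ᵀ Qᵢ z(s,u) + lᵢᵀ z(s,u) + Σⱼ (½ uⱼᵀ Rᵢⱼ uⱼ + rᵢⱼᵀ uⱼ), where z(s,u) = A s + Σⱼ Bⱼ uⱼ. Suppose δᵢ* : ℝⁿ → ℝ^{mᵢ} are measurable maps such that for every s ∈ ℝⁿ the action profile (δ₁*(s),…,δ_N*(s)) is a Nash equilibrium of the deterministic game with costs (Ĵ₁(s,·),…,Ĵ_N(s,·)), and such that the strategies γᵢ* := δᵢ* ∘ x̂ are square-integrable under the law of y. Then (γ₁*,…,γ_N*) is a Nash equilibrium of the stochastic game with costs (J₁,…,J_N): for every player i and every admissible measurable strategy γᵢ, Jᵢ(γ₁*,…,γᵢ*,…,γ_N*) ≤ Jᵢ(γ₁*,…,γᵢ,…,γ_N*). -/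
open MeasureTheory ProbabilityTheory Matrix
open scoped BigOperators

/-- Cost of player with data `(Q, l, R, r)` in the deterministic one-stage game with exact
state `s` and action profile `u`: `½ z Q z + lᵀ z + Σⱼ (½ uⱼᵀ Rⱼ uⱼ + rⱼᵀ uⱼ)` where
`z = A s + Σⱼ Bⱼ uⱼ`. -/
noncomputable def detStageCost {n N : ℕ} {m : Fin N → ℕ}
    (A : Matrix (Fin n) (Fin n) ℝ)
    (B : ∀ j : Fin N, Matrix (Fin n) (Fin (m j)) ℝ)
    (Q : Matrix (Fin n) (Fin n) ℝ) (l : Fin n → ℝ)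
    (R : ∀ j : Fin N, Matrix (Fin (m j)) (Fin (m j)) ℝ)
    (r : ∀ j : Fin N, Fin (m j) → ℝ)
    (s : Fin n → ℝ) (u : ∀ j : Fin N, Fin (m j) → ℝ) : ℝ :=
  let zd := A.mulVec s + ∑ j, (B j).mulVec (u j)
  (1 / 2) * (zd ⬝ᵥ Q.mulVec zd) + (l ⬝ᵥ zd)
    + ∑ j, ((1 / 2) * (u j ⬝ᵥ (R j).mulVec (u j)) + (r j ⬝ᵥ u j))

/-- Expected cost of player with data `(Q, l, R, r)` in the one-stage stochastic game with state
`x₀ = x̂(y) + e`, next state `x₁ = A x₀ + Σⱼ Bⱼ σⱼ(y) + w` and measurable strategies `σⱼ` of the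
shared measurement `y`. -/
noncomputable def stochStageCost {Ω : Type*} [MeasurableSpace Ω] (P : Measure Ω)
    {z n N : ℕ} {m : Fin N → ℕ}
    (y : Ω → Fin z → ℝ) (xhat : (Fin z → ℝ) → (Fin n → ℝ)) (e w : Ω → Fin n → ℝ)
    (A : Matrix (Fin n) (Fin n) ℝ)
    (B : ∀ j : Fin N, Matrix (Fin n) (Fin (m j)) ℝ)
    (Q : Matrix (Fin n) (Fin n) ℝ) (l : Fin n → ℝ)
    (R : ∀ j : Fin N, Matrix (Fin (m j)) (Fin (m j)) ℝ)
    (r : ∀ j : Fin N, Fin (m j) → ℝ)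
    (σ : ∀ j : Fin N, (Fin z → ℝ) → (Fin (m j) → ℝ)) : ℝ :=
  ∫ ω,
    (let x₁ := A.mulVec (xhat (y ω) + e ω) + (∑ j, (B j).mulVec (σ j (y ω))) + w ω
     (1 / 2) * (x₁ ⬝ᵥ Q.mulVec x₁) + (l ⬝ᵥ x₁)
       + ∑ j, ((1 / 2) * (σ j (y ω) ⬝ᵥ (R j).mulVec (σ j (y ω))) + (r j ⬝ᵥ σ j (y ω)))) ∂P

/-! Write the next state as `x₁ = g(y) + v` with `g = A x̂ + Σⱼ Bⱼ σⱼ` a function of the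
measurement and `v = A e + w` the uncontrolled noise. Every coordinate of `v` has mean zero and is
independent of `y`, so the cross terms `g(y)ᵀ Q v` and `vᵀ Q g(y)` have mean zero and the expected
cost of any profile `σ` is `E[Ĵ(x̂(y), σ(y))]` plus a constant not depending on `σ`. Minimising
`Ĵ(x̂(y), ·)` pointwise therefore minimises the expected cost. -/

section Moments

variable {Ω : Type*} [MeasurableSpace Ω] {μ : Measure Ω}

theorem memLp_mulVec_apply {ι κ : Type*} [Fintype κ] {p : ENNReal} (M : Matrix ι κ ℝ)
    {f : Ω → κ → ℝ} (hf : ∀ b, MemLp (fun ω => f ω b) p μ) (a : ι) :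
    MemLp (fun ω => (M *ᵥ f ω) a) p μ := by
  simp only [mulVec, dotProduct]
  exact memLp_finsetSum _ fun b _ => (hf b).const_mul _

theorem integrable_dotProduct {ι : Type*} [Fintype ι] (c : ι → ℝ) {f : Ω → ι → ℝ}
    (hf : ∀ a, Integrable (fun ω => f ω a) μ) :
    Integrable (fun ω => c ⬝ᵥ f ω) μ := by
  simp only [dotProduct]
  exact integrable_finsetSum _ fun a _ => (hf a).const_mul _

theorem dotProduct_mulVec_eq_sum {ι κ : Type*} [Fintype ι] [Fintype κ] (M : Matrix ι κ ℝ)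
    (u : ι → ℝ) (v : κ → ℝ) :
    u ⬝ᵥ M *ᵥ v = ∑ a, ∑ b, M a b * (u a * v b) := by
  simp only [dotProduct, mulVec, Finset.mul_sum]
  exact Finset.sum_congr rfl fun a _ => Finset.sum_congr rfl fun b _ => by ring

theorem integrable_dotProduct_mulVec {ι κ : Type*} [Fintype ι] [Fintype κ] (M : Matrix ι κ ℝ)
    {f : Ω → ι → ℝ} {g : Ω → κ → ℝ} (hfg : ∀ a b, Integrable (fun ω => f ω a * g ω b) μ) :
    Integrable (fun ω => f ω ⬝ᵥ M *ᵥ g ω) μ := by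
  simp only [dotProduct_mulVec_eq_sum]
  exact integrable_finsetSum _ fun a _ => integrable_finsetSum _ fun b _ =>
    (hfg a b).const_mul _

theorem integral_dotProduct_mulVec {ι κ : Type*} [Fintype ι] [Fintype κ] (M : Matrix ι κ ℝ)
    {f : Ω → ι → ℝ} {g : Ω → κ → ℝ} (hfg : ∀ a b, Integrable (fun ω => f ω a * g ω b) μ) :
    ∫ ω, f ω ⬝ᵥ M *ᵥ g ω ∂μ = ∑ a, ∑ b, M a b * ∫ ω, f ω a * g ω b ∂μ := by
  simp only [dotProduct_mulVec_eq_sum]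
  rw [integral_finsetSum (f := fun a ω => ∑ b, M a b * (f ω a * g ω b)) _
    fun a _ => integrable_finsetSum _ fun b _ => (hfg a b).const_mul _]
  refine Finset.sum_congr rfl fun a _ => ?_
  rw [integral_finsetSum _ fun b _ => (hfg a b).const_mul _]
  simp only [integral_const_mul]

theorem integrable_half_quadForm_add_dotProduct {ι : Type*} [Fintype ι] [IsFiniteMeasure μ]
    (Q : Matrix ι ι ℝ) (l : ι → ℝ) {f : Ω → ι → ℝ} (hf : ∀ a, MemLp (fun ω => f ω a) 2 μ) :
    Integrable (fun ω => 1 / 2 * (f ω ⬝ᵥ Q *ᵥ f ω) + l ⬝ᵥ f ω) μ :=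
  ((integrable_dotProduct_mulVec Q fun a b => (hf a).integrable_mul (hf b)).const_mul _).add
    (integrable_dotProduct l fun a => (hf a).integrable one_le_two)

theorem ProbabilityTheory.IndepFun.integral_mul_eq_zero {X Y : Ω → ℝ} (hXY : IndepFun X Y μ)
    (hX : AEStronglyMeasurable X μ) (hY : AEStronglyMeasurable Y μ) (hY0 : ∫ ω, Y ω ∂μ = 0) :
    ∫ ω, X ω * Y ω ∂μ = 0 := by
  rw [hXY.integral_fun_mul_eq_mul_integral hX hY, hY0, mul_zero]

end Moments

theorem half_quadForm_add_dotProduct_add {ι : Type*} [Fintype ι] (Q : Matrix ι ι ℝ)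
    (l g v : ι → ℝ) :
    1 / 2 * ((g + v) ⬝ᵥ Q *ᵥ (g + v)) + l ⬝ᵥ (g + v)
      = (1 / 2 * (g ⬝ᵥ Q *ᵥ g) + l ⬝ᵥ g) + 1 / 2 * (g ⬝ᵥ Q *ᵥ v + v ⬝ᵥ Q *ᵥ g)
        + (1 / 2 * (v ⬝ᵥ Q *ᵥ v) + l ⬝ᵥ v) := by
  simp only [mulVec_add, dotProduct_add, add_dotProduct]
  ring

theorem stageCost_eq_detStageCost_add {n N : ℕ} {m : Fin N → ℕ}
    (A : Matrix (Fin n) (Fin n) ℝ) (B : ∀ j : Fin N, Matrix (Fin n) (Fin (m j)) ℝ)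
    (Q : Matrix (Fin n) (Fin n) ℝ) (l : Fin n → ℝ)
    (R : ∀ j : Fin N, Matrix (Fin (m j)) (Fin (m j)) ℝ) (r : ∀ j : Fin N, Fin (m j) → ℝ)
    (s d w : Fin n → ℝ) (u : ∀ j : Fin N, Fin (m j) → ℝ) :
    let x₁ := A *ᵥ (s + d) + ∑ j, B j *ᵥ u j + w
    let g := A *ᵥ s + ∑ j, B j *ᵥ u j
    let v := A *ᵥ d + w
    1 / 2 * (x₁ ⬝ᵥ Q *ᵥ x₁) + l ⬝ᵥ x₁ + ∑ j, (1 / 2 * (u j ⬝ᵥ R j *ᵥ u j) + r j ⬝ᵥ u j)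
      = detStageCost A B Q l R r s u + 1 / 2 * (g ⬝ᵥ Q *ᵥ v + v ⬝ᵥ Q *ᵥ g)
        + (1 / 2 * (v ⬝ᵥ Q *ᵥ v) + l ⬝ᵥ v) := by
  intro x₁ g v
  have hx₁ : x₁ = g + v := by
    simp only [x₁, g, v, mulVec_add]
    abel
  rw [hx₁, half_quadForm_add_dotProduct_add]
  simp only [detStageCost]
  ring

section StochasticGame

variable {Ω : Type*} [MeasurableSpace Ω] {P : Measure Ω}
  {z n N : ℕ} {m : Fin N → ℕ} {y : Ω → Fin z → ℝ} {xhat : (Fin z → ℝ) → (Fin n → ℝ)}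
  {e w : Ω → Fin n → ℝ} {σ : ∀ j : Fin N, (Fin z → ℝ) → (Fin (m j) → ℝ)}
  (A : Matrix (Fin n) (Fin n) ℝ) (B : ∀ j : Fin N, Matrix (Fin n) (Fin (m j)) ℝ)

theorem memLp_controlledState_apply (hxhatL2 : ∀ a, MemLp (fun ω => xhat (y ω) a) 2 P)
    (hσL2 : ∀ j k, MemLp (fun ω => σ j (y ω) k) 2 P) (a : Fin n) :
    MemLp (fun ω => (A *ᵥ xhat (y ω) + ∑ j, B j *ᵥ σ j (y ω)) a) 2 P := by
  simp only [Pi.add_apply, Finset.sum_apply]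
  exact (memLp_mulVec_apply A hxhatL2 a).add
    (memLp_finsetSum _ fun j _ => memLp_mulVec_apply (B j) (hσL2 j) a)

theorem integrable_detStageCost_comp [IsFiniteMeasure P]
    (Q : Matrix (Fin n) (Fin n) ℝ) (l : Fin n → ℝ)
    (R : ∀ j : Fin N, Matrix (Fin (m j)) (Fin (m j)) ℝ) (r : ∀ j : Fin N, Fin (m j) → ℝ)
    (hxhatL2 : ∀ a, MemLp (fun ω => xhat (y ω) a) 2 P)
    (hσL2 : ∀ j k, MemLp (fun ω => σ j (y ω) k) 2 P) :
    Integrable (fun ω => detStageCost A B Q l R r (xhat (y ω)) (fun j => σ j (y ω))) P := by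
  simp only [detStageCost]
  exact (integrable_half_quadForm_add_dotProduct Q l
      (memLp_controlledState_apply A B hxhatL2 hσL2)).add
    (integrable_finsetSum _ fun j _ => integrable_half_quadForm_add_dotProduct (R j) (r j) (hσL2 j))

theorem integral_mul_noise_eq_zero
    (heL2 : ∀ a, MemLp (fun ω => e ω a) 2 P) (hwL2 : ∀ a, MemLp (fun ω => w ω a) 2 P)
    (h_e_indep_y : IndepFun e y P) (h_w_indep_ye : IndepFun w (fun ω => (y ω, e ω)) P)
    (he0 : ∀ a, ∫ ω, e ω a ∂P = 0) (hw0 : ∀ a, ∫ ω, w ω a ∂P = 0)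
    {φ : (Fin z → ℝ) → ℝ} (hφ : Measurable φ) (hφL2 : MemLp (fun ω => φ (y ω)) 2 P)
    (b : Fin n) :
    ∫ ω, φ (y ω) * (A *ᵥ e ω + w ω) b ∂P = 0 := by
  have he_orth : ∀ k, ∫ ω, φ (y ω) * e ω k ∂P = 0 := fun k =>
    (h_e_indep_y.comp (measurable_pi_apply k) hφ).symm.integral_mul_eq_zero
      hφL2.aestronglyMeasurable (heL2 k).aestronglyMeasurable (he0 k)
  have hw_orth : ∫ ω, φ (y ω) * w ω b ∂P = 0 :=
    (h_w_indep_ye.comp (measurable_pi_apply b) (hφ.comp measurable_fst)).symm.integral_mul_eq_zero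
      hφL2.aestronglyMeasurable (hwL2 b).aestronglyMeasurable (hw0 b)
  have he_int : ∀ k, Integrable (fun ω => φ (y ω) * e ω k) P := fun k =>
    hφL2.integrable_mul (heL2 k)
  have hw_int : Integrable (fun ω => φ (y ω) * w ω b) P := hφL2.integrable_mul (hwL2 b)
  simp only [Pi.add_apply, mulVec, dotProduct, mul_add, Finset.mul_sum, mul_left_comm (φ _)]
  rw [integral_add (integrable_finsetSum _ fun k _ => (he_int k).const_mul _) hw_int,
    integral_finsetSum _ fun k _ => (he_int k).const_mul _]
  simp only [integral_const_mul, he_orth, hw_orth, mul_zero, Finset.sum_const_zero, add_zero]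

theorem stochStageCost_eq_integral_detStageCost_add [IsFiniteMeasure P]
    (hxhat : Measurable xhat) (hxhatL2 : ∀ a, MemLp (fun ω => xhat (y ω) a) 2 P)
    (heL2 : ∀ a, MemLp (fun ω => e ω a) 2 P) (hwL2 : ∀ a, MemLp (fun ω => w ω a) 2 P)
    (h_e_indep_y : IndepFun e y P) (h_w_indep_ye : IndepFun w (fun ω => (y ω, e ω)) P)
    (he0 : ∀ a, ∫ ω, e ω a ∂P = 0) (hw0 : ∀ a, ∫ ω, w ω a ∂P = 0)
    (Q : Matrix (Fin n) (Fin n) ℝ) (l : Fin n → ℝ)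
    (R : ∀ j : Fin N, Matrix (Fin (m j)) (Fin (m j)) ℝ) (r : ∀ j : Fin N, Fin (m j) → ℝ)
    (hσ : ∀ j, Measurable (σ j)) (hσL2 : ∀ j k, MemLp (fun ω => σ j (y ω) k) 2 P) :
    stochStageCost P y xhat e w A B Q l R r σ
      = ∫ ω, detStageCost A B Q l R r (xhat (y ω)) (fun j => σ j (y ω)) ∂P
        + ∫ ω, (1 / 2 * ((A *ᵥ e ω + w ω) ⬝ᵥ Q *ᵥ (A *ᵥ e ω + w ω))
            + l ⬝ᵥ (A *ᵥ e ω + w ω)) ∂P := by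
  simp only [stochStageCost, stageCost_eq_detStageCost_add]
  set g : Ω → Fin n → ℝ := fun ω => A *ᵥ xhat (y ω) + ∑ j, B j *ᵥ σ j (y ω)
  set v : Ω → Fin n → ℝ := fun ω => A *ᵥ e ω + w ω
  have hgL2 : ∀ a, MemLp (fun ω => g ω a) 2 P := memLp_controlledState_apply A B hxhatL2 hσL2
  have hvL2 : ∀ a, MemLp (fun ω => v ω a) 2 P := fun a =>
    (memLp_mulVec_apply A heL2 a).add (hwL2 a)
  have hgv : ∀ a b, Integrable (fun ω => g ω a * v ω b) P := fun a b =>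
    (hgL2 a).integrable_mul (hvL2 b)
  have hvg : ∀ a b, Integrable (fun ω => v ω a * g ω b) P := fun a b =>
    (hvL2 a).integrable_mul (hgL2 b)
  have hg_orth : ∀ a b, ∫ ω, g ω a * v ω b ∂P = 0 := fun a b =>
    integral_mul_noise_eq_zero A heL2 hwL2 h_e_indep_y h_w_indep_ye he0 hw0
      (φ := fun t => (A *ᵥ xhat t + ∑ j, B j *ᵥ σ j t) a) (by fun_prop) (hgL2 a) b
  have hcross : ∫ ω, 1 / 2 * (g ω ⬝ᵥ Q *ᵥ v ω + v ω ⬝ᵥ Q *ᵥ g ω) ∂P = 0 := by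
    rw [integral_const_mul, integral_add (integrable_dotProduct_mulVec Q hgv)
        (integrable_dotProduct_mulVec Q hvg), integral_dotProduct_mulVec Q hgv,
      integral_dotProduct_mulVec Q hvg]
    simp only [mul_comm (v _ _), hg_orth, mul_zero, Finset.sum_const_zero, add_zero]
  have hnoise := integrable_half_quadForm_add_dotProduct Q l hvL2
  have hdet := integrable_detStageCost_comp A B Q l R r hxhatL2 hσL2
  have hcross_int : Integrable (fun ω => 1 / 2 * (g ω ⬝ᵥ Q *ᵥ v ω + v ω ⬝ᵥ Q *ᵥ g ω)) P :=
    ((integrable_dotProduct_mulVec Q hgv).add (integrable_dotProduct_mulVec Q hvg)).const_mul _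
  refine (integral_add (hdet.add hcross_int) hnoise).trans ?_
  simp only [Pi.add_apply]
  rw [integral_add hdet hcross_int, hcross, add_zero]

end StochasticGame

theorem one_stage_separation_principle_general
    {Ω : Type*} [MeasurableSpace Ω] (P : Measure Ω) [IsProbabilityMeasure P]
    {z n N : ℕ} {m : Fin N → ℕ}
    (y : Ω → Fin z → ℝ)
    (xhat : (Fin z → ℝ) → (Fin n → ℝ)) (hxhat : Measurable xhat)
    (hxhatL2 : ∀ i, MemLp (fun ω => xhat (y ω) i) 2 P)
    (e w : Ω → Fin n → ℝ) (heL2 : ∀ i, MemLp (fun ω => e ω i) 2 P)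
    (hwL2 : ∀ i, MemLp (fun ω => w ω i) 2 P)
    (h_e_indep_y : IndepFun e y P)
    (h_w_indep_ye : IndepFun w (fun ω => (y ω, e ω)) P)
    (he0 : ∀ i, ∫ ω, e ω i ∂P = 0) (hw0 : ∀ i, ∫ ω, w ω i ∂P = 0)
    (A : Matrix (Fin n) (Fin n) ℝ)
    (B : ∀ j : Fin N, Matrix (Fin n) (Fin (m j)) ℝ)
    (Q : Fin N → Matrix (Fin n) (Fin n) ℝ)
    (l : Fin N → Fin n → ℝ)
    (R : ∀ _i : Fin N, ∀ j : Fin N, Matrix (Fin (m j)) (Fin (m j)) ℝ)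
    (r : ∀ _i : Fin N, ∀ j : Fin N, Fin (m j) → ℝ)
    -- the pointwise deterministic Nash equilibrium strategies
    (δ : ∀ i : Fin N, (Fin n → ℝ) → (Fin (m i) → ℝ))
    (hδmeas : ∀ i, Measurable (δ i))
    (hδL2 : ∀ i k, MemLp (fun ω => δ i (xhat (y ω)) k) 2 P)
    (hNashPt : ∀ (s : Fin n → ℝ) (i : Fin N) (u : Fin (m i) → ℝ),
      detStageCost A B (Q i) (l i) (R i) (r i) s (fun j => δ j s)
        ≤ detStageCost A B (Q i) (l i) (R i) (r i) s
            (Function.update (fun j => δ j s) i u)) :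
    ∀ (i : Fin N) (γ : (Fin z → ℝ) → Fin (m i) → ℝ),
      Measurable γ → (∀ k, MemLp (fun ω => γ (y ω) k) 2 P) →
      stochStageCost P y xhat e w A B (Q i) (l i) (R i) (r i)
          (fun j s => δ j (xhat s))
        ≤ stochStageCost P y xhat e w A B (Q i) (l i) (R i) (r i)
            (Function.update (fun j s => δ j (xhat s)) i γ) := by
  intro i γ hγ hγL2
  have hstar : ∀ j, Measurable fun s => δ j (xhat s) := fun j => (hδmeas j).comp hxhat
  have hdev : ∀ j, Measurable (Function.update (fun j s => δ j (xhat s)) i γ j) :=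
    (Function.forall_update_iff _ fun _ f => Measurable f).2 ⟨hγ, fun j _ => hstar j⟩
  have hdevL2 : ∀ j k,
      MemLp (fun ω => Function.update (fun j s => δ j (xhat s)) i γ j (y ω) k) 2 P :=
    (Function.forall_update_iff _
      fun j (f : (Fin z → ℝ) → Fin (m j) → ℝ) => ∀ k, MemLp (fun ω => f (y ω) k) 2 P).2
      ⟨hγL2, fun j _ => hδL2 j⟩
  rw [stochStageCost_eq_integral_detStageCost_add A B hxhat hxhatL2 heL2 hwL2 h_e_indep_y
      h_w_indep_ye he0 hw0 (Q i) (l i) (R i) (r i) hstar hδL2,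
    stochStageCost_eq_integral_detStageCost_add A B hxhat hxhatL2 heL2 hwL2 h_e_indep_y
      h_w_indep_ye he0 hw0 (Q i) (l i) (R i) (r i) hdev hdevL2]
  refine add_le_add_left (integral_mono ?_ ?_ fun ω => ?_) _
  · exact integrable_detStageCost_comp (σ := fun j s => δ j (xhat s)) A B (Q i) (l i) (R i) (r i)
      hxhatL2 hδL2
  · exact integrable_detStageCost_comp A B (Q i) (l i) (R i) (r i) hxhatL2 hdevL2
  · simpa only [Function.apply_update (fun j (f : (Fin z → ℝ) → Fin (m j) → ℝ) => f (y ω))]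
      using hNashPt (xhat (y ω)) i (γ (y ω))

/-- One-stage separation principle for linear-quadratic stochastic games with shared
measurements: if `δᵢ*` gives, for every exact state `s`, a Nash equilibrium of the deterministic
one-stage game, then the strategies `γᵢ* = δᵢ* ∘ x̂` (the deterministic equilibrium applied to the
estimated state) form a Nash equilibrium of the stochastic game: no player can lower their
expected cost by unilaterally deviating to any measurable square-integrable strategy. -/
theorem one_stage_separation_principle
    {Ω : Type*} [MeasurableSpace Ω] (P : Measure Ω) [IsProbabilityMeasure P]
    {z n N : ℕ} {m : Fin N → ℕ}
    (y : Ω → Fin z → ℝ) (hy : Measurable y)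
    (xhat : (Fin z → ℝ) → (Fin n → ℝ)) (hxhat : Measurable xhat)
    (hxhatL2 : ∀ i, MemLp (fun ω => xhat (y ω) i) 2 P)
    (e w : Ω → Fin n → ℝ) (he : Measurable e) (hw : Measurable w)
    (heL2 : ∀ i, MemLp (fun ω => e ω i) 2 P)
    (hwL2 : ∀ i, MemLp (fun ω => w ω i) 2 P)
    (h_e_indep_y : IndepFun e y P)
    (h_w_indep_ye : IndepFun w (fun ω => (y ω, e ω)) P)
    (he0 : ∀ i, ∫ ω, e ω i ∂P = 0) (hw0 : ∀ i, ∫ ω, w ω i ∂P = 0)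
    (Se Sw : Matrix (Fin n) (Fin n) ℝ)
    (hSe : ∀ i j, Se i j = ∫ ω, e ω i * e ω j ∂P)
    (hSw : ∀ i j, Sw i j = ∫ ω, w ω i * w ω j ∂P)
    (A : Matrix (Fin n) (Fin n) ℝ)
    (B : ∀ j : Fin N, Matrix (Fin n) (Fin (m j)) ℝ)
    (Q : Fin N → Matrix (Fin n) (Fin n) ℝ) (hQ : ∀ i, (Q i).IsSymm)
    (l : Fin N → Fin n → ℝ)
    (R : ∀ _i : Fin N, ∀ j : Fin N, Matrix (Fin (m j)) (Fin (m j)) ℝ)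
    (r : ∀ _i : Fin N, ∀ j : Fin N, Fin (m j) → ℝ)
    -- the pointwise deterministic Nash equilibrium strategies
    (δ : ∀ i : Fin N, (Fin n → ℝ) → (Fin (m i) → ℝ))
    (hδmeas : ∀ i, Measurable (δ i))
    (hδL2 : ∀ i k, MemLp (fun ω => δ i (xhat (y ω)) k) 2 P)
    (hNashPt : ∀ (s : Fin n → ℝ) (i : Fin N) (u : Fin (m i) → ℝ),
      detStageCost A B (Q i) (l i) (R i) (r i) s (fun j => δ j s)
        ≤ detStageCost A B (Q i) (l i) (R i) (r i) s
            (Function.update (fun j => δ j s) i u)) :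
    ∀ (i : Fin N) (γ : (Fin z → ℝ) → Fin (m i) → ℝ),
      Measurable γ → (∀ k, MemLp (fun ω => γ (y ω) k) 2 P) →
      stochStageCost P y xhat e w A B (Q i) (l i) (R i) (r i)
          (fun j s => δ j (xhat s))
        ≤ stochStageCost P y xhat e w A B (Q i) (l i) (R i) (r i)
            (Function.update (fun j s => δ j (xhat s)) i γ) :=
  one_stage_separation_principle_general P y xhat hxhat hxhatL2 e w heL2 hwL2 h_e_indep_y
    h_w_indep_ye he0 hw0 A B Q l R r δ hδmeas hδL2 hNashPt
end
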